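/- For every n ∈ ℕ, every λ ∈ (0,n), every x ∈ {0,1}^n, and every r ∈ {0,1,…,n}, the probability that C_λ(x) = r equals the probability that ∑_{i=1}^n y_i = r, where y_1,…,y_n are independent with y_i ~ R_{n,λ}(x_i). -/

import Mathlib

open scoped ENNReal Classical

noncomputable section

namespace ShuffledDP

universe u v w

lemma half_le_one : (2⁻¹ : ℝ≥0∞) ≤ 1 := by
  simp [ENNReal.inv_le_one]

/-- Independent samples from a finite family of PMFs, collected (in order) as a list. -/
noncomputable def indep {α : Type u} : (n : ℕ) → (Fin n → PMF α) → PMF (List α)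
  | 0, _ => PMF.pure []
  | n + 1, f =>
      (f 0).bind fun y => (indep n fun i => f i.succ).bind fun ys => PMF.pure (y :: ys)

/-- `(ε, δ)`-differential privacy of a mechanism `M` with respect to a
neighboring relation `nbr` on inputs. -/
def DPFor {I : Type u} {Z : Type v} (nbr : I → I → Prop) (M : I → PMF Z) (ε δ : ℝ) : Prop :=
  ∀ x x', nbr x x' → ∀ T : Set Z,
    (M x).toOuterMeasure T ≤
      ENNReal.ofReal (Real.exp ε) * (M x').toOuterMeasure T + ENNReal.ofReal δ

/-- Two datasets are neighbors if they differ in at most one coordinate. -/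
def Neighbor {n : ℕ} {X : Type u} (x x' : Fin n → X) : Prop :=
  ∃ j, ∀ i, i ≠ j → x i = x' i

/-- The randomized-response local randomizer `R_{n,λ}`: output the input bit with
probability `1 - λ/n` and a uniformly random bit with probability `λ/n`. -/
noncomputable def rr (n : ℕ) (lam : ℝ) (x : Bool) : PMF Bool :=
  (PMF.bernoulli (min (ENNReal.ofReal (lam / n)) 1).toNNReal ((ENNReal.toNNReal_mono ENNReal.one_ne_top (min_le_right _ _)).trans_eq ENNReal.toNNReal_one)).bind fun b =>
    if b then PMF.bernoulli (2⁻¹ : ℝ≥0∞).toNNReal ((ENNReal.toNNReal_mono ENNReal.one_ne_top half_le_one).trans_eq ENNReal.toNNReal_one) else PMF.pure x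

/-- Binomial distribution, valued in `ℕ`. -/
noncomputable def binom (p : ℝ≥0∞) (h : p ≤ 1) (m : ℕ) : PMF ℕ :=
  (PMF.binomial p.toNNReal ((ENNReal.toNNReal_mono ENNReal.one_ne_top h).trans_eq ENNReal.toNNReal_one) m).map Fin.val

/-- Uniform distribution over the subsets of `Fin n` of size `s`. -/
noncomputable def uniformSubset (n s : ℕ) : PMF (Finset (Fin n)) :=
  if h : ((Finset.univ : Finset (Fin n)).powersetCard s).Nonempty then
    PMF.uniformOfFinset _ h
  else PMF.pure ∅

/-- `∑_{i ∉ H} x_i` for a boolean dataset `x`. -/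
def sumOutside {n : ℕ} (H : Finset (Fin n)) (x : Fin n → Bool) : ℕ :=
  ∑ i ∈ Hᶜ, (if x i then 1 else 0)

/-- The mechanism `C_H`: output `∑_{i ∉ H} x_i + B` with `B ~ Bin(|H|, 1/2)`. -/
noncomputable def CH (n : ℕ) (H : Finset (Fin n)) (x : Fin n → Bool) : PMF ℕ :=
  (binom 2⁻¹ half_le_one H.card).map fun B => sumOutside H x + B

/-- The mechanism `C_s`: sample `H` uniformly among size-`s` subsets, then run `C_H`. -/
noncomputable def Cs (n s : ℕ) (x : Fin n → Bool) : PMF ℕ :=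
  (uniformSubset n s).bind fun H => CH n H x

/-- The mechanism `C_λ`: sample `s ~ Bin(n, λ/n)`, then run `C_s`. -/
noncomputable def Cmech (n : ℕ) (lam : ℝ) (x : Fin n → Bool) : PMF ℕ :=
  (binom (min (ENNReal.ofReal (lam / n)) 1) (min_le_right _ _) n).bind fun s => Cs n s x

/-- The shuffled bit-sum mechanism `Π_{n,λ}`: the random multiset `{y_1, …, y_n}`
of the outputs `y_i ~ R_{n,λ}(x_i)`. -/
noncomputable def shuffleBit (n : ℕ) (lam : ℝ) (x : Fin n → Bool) : PMF (Multiset Bool) :=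
  (indep n fun i => rr n lam (x i)).map fun l => (l : Multiset Bool)

/-- The bit-sum protocol output `P_{n,λ}(x) = (n/(n-λ)) (∑ y_i - λ/2)`. -/
noncomputable def bitSumOutput (n : ℕ) (lam : ℝ) (x : Fin n → Bool) : PMF ℝ :=
  (indep n fun i => rr n lam (x i)).map fun l =>
    ((n : ℝ) / (n - lam)) * ((l.count true : ℝ) - lam / 2)

/-- The randomized-rounding encoder `E_r`. -/
noncomputable def encoder (r : ℕ) (x : ℝ) : PMF (Fin r → Bool) :=
  (PMF.bernoulli (min (ENNReal.ofReal (x * r - ⌈x * r⌉ + 1)) 1).toNNReal ((ENNReal.toNNReal_mono ENNReal.one_ne_top (min_le_right _ _)).trans_eq ENNReal.toNNReal_one)).map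
    fun b i => if ((i : ℕ) : ℤ) + 1 < ⌈x * r⌉ then true
      else if ((i : ℕ) : ℤ) + 1 = ⌈x * r⌉ then b else false

/-- The real-sum shuffled mechanism `Π^ℝ_{n,λ,r}`: the random multiset of all `n·r`
bits `y_{i,j} ~ R_{n,λ}(b_{i,j})` where `(b_{i,1},…,b_{i,r}) = E_r(x_i)`. -/
noncomputable def realShuffle (n : ℕ) (lam : ℝ) (r : ℕ) (X : Fin n → ℝ) :
    PMF (Multiset Bool) :=
  (indep n fun i =>
      (encoder r (X i)).bind fun b =>
        (indep r fun j => rr n lam (b j)).map fun l => (l : Multiset Bool)).map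
    fun ms => ms.sum

/-- The real-sum protocol output `z = (1/r)(n/(n-λ)) (∑_{i,j} y_{i,j} - λ r/2)`. -/
noncomputable def realOutput (n : ℕ) (lam : ℝ) (r : ℕ) (X : Fin n → ℝ) : PMF ℝ :=
  (realShuffle n lam r X).map fun m =>
    (1 / (r : ℝ)) * ((n : ℝ) / (n - lam)) * ((m.count true : ℝ) - lam * r / 2)

/-- The shuffled mechanism associated with a randomizer producing a multiset of
messages: the union (multiset sum) of the `n` users' message multisets. -/
noncomputable def shuffM {𝒳 : Type u} {𝒴 : Type v} (n : ℕ) (R : 𝒳 → PMF (Multiset 𝒴))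
    (x : Fin n → 𝒳) : PMF (Multiset 𝒴) :=
  (indep n fun i => R (x i)).map fun l => l.sum

/-- The multiset of the `m` messages output by an `m`-message randomizer. -/
noncomputable def vecR {𝒳 : Type u} {𝒴 : Type v} {m : ℕ} (R : 𝒳 → PMF (Fin m → 𝒴)) :
    𝒳 → PMF (Multiset 𝒴) :=
  fun a => (R a).map fun v => ((List.ofFn v : List 𝒴) : Multiset 𝒴)

/-- The one-message shuffled mechanism `Π_R`: the random multiset `{R(x_1), …, R(x_n)}`. -/
noncomputable def shuffle1 {𝒳 : Type u} {𝒴 : Type v} (n : ℕ) (R : 𝒳 → PMF 𝒴)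
    (x : Fin n → 𝒳) : PMF (Multiset 𝒴) :=
  (indep n fun i => R (x i)).map fun l => (l : Multiset 𝒴)

/-- `(ε, δ)`-differential privacy of a local randomizer (any two inputs are neighbors). -/
def RandDP {𝒳 : Type u} {𝒴 : Type v} (R : 𝒳 → PMF 𝒴) (ε δ : ℝ) : Prop :=
  ∀ x x' : 𝒳, ∀ T : Set 𝒴,
    (R x).toOuterMeasure T ≤
      ENNReal.ofReal (Real.exp ε) * (R x').toOuterMeasure T + ENNReal.ofReal δ

/-- The output of the local protocol `(R, A)`. -/
noncomputable def localOut {𝒳 : Type u} {𝒴 : Type v} {𝒵 : Type w} (n : ℕ)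
    (R : 𝒳 → PMF 𝒴) (A : List 𝒴 → 𝒵) (X : Fin n → 𝒳) : PMF 𝒵 :=
  (indep n fun i => R (X i)).map A

/-- `(a, b)`-accuracy of a protocol `P` for a function `f` w.r.t. a distance `d`. -/
def AccFor {I : Type u} {𝒵 : Type w} (P : I → PMF 𝒵) (f : I → 𝒵) (d : 𝒵 → 𝒵 → ℝ)
    (a b : ℝ) : Prop :=
  ∀ X, ENNReal.ofReal (1 - b) ≤ (P X).toOuterMeasure {z | d z (f X) ≤ a}

/-!
Both mechanisms are mixtures, over the set `H` of users whose bit is replaced by a fair coin, of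
"`∑_{i ∉ H} x_i` plus a `Bin(|H|, 1/2)` count" (the law `CH`), with the same weights
`q^|H| (1-q)^(n-|H|)`, `q = min (λ/n) 1`. For `C_λ` this is because a uniform `|H|`-subset with
`|H| ~ Bin(n, q)` puts mass `q^|H| (1-q)^(n-|H|)` on each `H`. For randomized response it comes
from expanding `∏ᵢ (q/2 + (1-q)[yᵢ = xᵢ])` over subsets `H`; the `y` agreeing with `x` off `H`
with `r` ones correspond to the subsets `T ⊆ H` with `∑_{i ∉ H} x_i + |T| = r`.
-/

open Finset

lemma binom_apply (q : ℝ≥0∞) (hq : q ≤ 1) (m k : ℕ) :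
    binom q hq m k = if k ≤ m then q ^ k * (1 - q) ^ (m - k) * m.choose k else 0 := by
  have hq_top : q ≠ ⊤ := ne_top_of_le_ne_top ENNReal.one_ne_top hq
  rw [binom, PMF.map_apply, tsum_fintype]
  split_ifs with hk
  · rw [Fintype.sum_eq_single (⟨k, Nat.lt_succ_of_le hk⟩ : Fin (m + 1))]
    · simp [PMF.binomial_apply, ENNReal.coe_toNNReal hq_top]
    · exact fun i hi => if_neg fun h => hi (Fin.ext h.symm)
  · refine sum_eq_zero fun i _ => if_neg ?_
    rintro rfl
    exact hk i.is_le

lemma uniformSubset_apply {n s : ℕ} (hs : s ≤ n) (H : Finset (Fin n)) :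
    uniformSubset n s H = if #H = s then ((n.choose s : ℝ≥0∞))⁻¹ else 0 := by
  have hne : ((univ : Finset (Fin n)).powersetCard s).Nonempty :=
    powersetCard_nonempty.2 (by simpa using hs)
  rw [uniformSubset, dif_pos hne, PMF.uniformOfFinset_apply]
  simp [mem_powersetCard, card_powersetCard]

lemma binom_bind_uniformSubset_apply (q : ℝ≥0∞) (hq : q ≤ 1) (n : ℕ) (H : Finset (Fin n)) :
    (binom q hq n).bind (uniformSubset n) H = q ^ #H * (1 - q) ^ (n - #H) := by
  have hH : #H ≤ n := (card_le_univ H).trans_eq (Fintype.card_fin n)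
  rw [PMF.bind_apply, tsum_eq_single #H]
  · rw [binom_apply, if_pos hH, uniformSubset_apply hH, if_pos rfl, mul_assoc,
      ENNReal.mul_inv_cancel (Nat.cast_ne_zero.2 (Nat.choose_pos hH).ne')
        (ENNReal.natCast_ne_top _), mul_one]
  · intro s hs
    by_cases hsn : s ≤ n
    · rw [uniformSubset_apply hsn, if_neg (Ne.symm hs), mul_zero]
    · rw [binom_apply, if_neg hsn, zero_mul]

lemma binom_bind_Cs_apply (q : ℝ≥0∞) (hq : q ≤ 1) (n : ℕ) (x : Fin n → Bool) (r : ℕ) :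
    (binom q hq n).bind (fun s => Cs n s x) r
      = ∑ H, q ^ #H * (1 - q) ^ (n - #H) * CH n H x r := by
  rw [show (binom q hq n).bind (fun s => Cs n s x)
      = ((binom q hq n).bind (uniformSubset n)).bind (CH n · x) from (PMF.bind_bind ..).symm,
    PMF.bind_apply, tsum_fintype]
  simp_rw [binom_bind_uniformSubset_apply]

lemma card_filter_powerset_add_card_eq {ι : Type*} (H : Finset ι) (s r : ℕ) :
    #{T ∈ H.powerset | s + #T = r} = if s ≤ r then (#H).choose (r - s) else 0 := by
  split_ifs with hsr
  · rw [← card_powersetCard, powersetCard_eq_filter]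
    congr 1
    exact filter_congr fun T _ => by omega
  · rw [card_eq_zero, filter_eq_empty_iff]
    intro T _ h
    omega

lemma CH_apply (n : ℕ) (H : Finset (Fin n)) (x : Fin n → Bool) (r : ℕ) :
    CH n H x r = #{T ∈ H.powerset | sumOutside H x + #T = r} * 2⁻¹ ^ #H := by
  rw [card_filter_powerset_add_card_eq, CH, PMF.map_apply]
  split_ifs with hs
  · rw [tsum_eq_single (r - sumOutside H x) (fun b hb => by rw [if_neg]; omega), if_pos (by omega),
      binom_apply]
    split_ifs with hk
    · rw [ENNReal.one_sub_inv_two, ← pow_add, Nat.add_sub_cancel' hk]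
      ring
    · rw [Nat.choose_eq_zero_of_lt (by omega)]
      simp
  · simp only [Nat.cast_zero, zero_mul]
    exact ENNReal.tsum_eq_zero.2 fun b => if_neg (by omega)

lemma indep_map_apply {α β : Type*} [Fintype α] :
    ∀ (n : ℕ) (f : Fin n → PMF α) (g : List α → β) (b : β),
    (indep n f).map g b = ∑ y : Fin n → α, if b = g (List.ofFn y) then ∏ i, f i (y i) else 0
  | 0, f, g, b => by
      simp [indep, PMF.pure_map, PMF.pure_apply]
  | n + 1, f, g, b => by
      have h_tail : ∀ a : α,
          ((indep n fun i => f i.succ).bind fun ys => PMF.pure (a :: ys)).map g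
            = (indep n fun i => f i.succ).map fun ys => g (a :: ys) := fun a => by
        rw [PMF.map_bind]; simp only [PMF.pure_map]; rfl
      rw [indep, PMF.map_bind, PMF.bind_apply, tsum_fintype,
        ← (Fin.consEquiv fun _ => α).sum_comp, Fintype.sum_prod_type]
      simp only [h_tail, indep_map_apply n, mul_sum, Fin.consEquiv_apply,
        List.ofFn_succ, Fin.prod_univ_succ, Fin.cons_zero, Fin.cons_succ, mul_ite, mul_zero]

lemma count_true_ofFn {n : ℕ} (y : Fin n → Bool) :
    (List.ofFn y).count true = #{i | y i = true} := by
  simpa using (Fin.card_filter_univ_eq_vector_get_eq_count true (List.Vector.ofFn y)).symm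

lemma count_true_ofFn_of_eqOn_compl {n : ℕ} {H : Finset (Fin n)} {x y : Fin n → Bool}
    (hy : ∀ i ∉ H, y i = x i) :
    (List.ofFn y).count true = sumOutside H x + #{i ∈ H | y i = true} := by
  rw [count_true_ofFn, card_filter, card_filter, ← sum_add_sum_compl H, add_comm, sumOutside]
  congr 1
  exact sum_congr rfl fun i hi => by rw [hy i (mem_compl.1 hi)]

lemma card_eqOn_compl_count_eq {n : ℕ} (H : Finset (Fin n)) (x : Fin n → Bool) (r : ℕ) :
    #{y : Fin n → Bool | (∀ i ∉ H, y i = x i) ∧ (List.ofFn y).count true = r}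
      = #{T ∈ H.powerset | sumOutside H x + #T = r} := by
  have h_restrict : ∀ T ⊆ H, {i ∈ H | (if i ∈ H then decide (i ∈ T) else x i) = true} = T :=
    fun T hTH => by
      ext i
      by_cases hi : i ∈ H
      · simp [hi]
      · simpa [hi] using fun h => hi (hTH h)
  apply card_nbij' (fun y => {i ∈ H | y i = true})
    (fun T i => if i ∈ H then decide (i ∈ T) else x i)
  · intro y hy
    simp only [coe_filter, mem_univ, true_and, Set.mem_setOf_eq, mem_powerset] at hy ⊢
    exact ⟨filter_subset _ _, by rw [← count_true_ofFn_of_eqOn_compl hy.1, hy.2]⟩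
  · intro T hT
    simp only [coe_filter, mem_univ, true_and, Set.mem_setOf_eq, mem_powerset] at hT ⊢
    have hout : ∀ i ∉ H, (if i ∈ H then decide (i ∈ T) else x i) = x i := fun i hi => if_neg hi
    exact ⟨hout, by rw [count_true_ofFn_of_eqOn_compl hout, h_restrict T hT.1, hT.2]⟩
  · intro y hy
    simp only [coe_filter, mem_univ, true_and, Set.mem_setOf_eq] at hy
    funext i
    by_cases hi : i ∈ H
    · simp [hi]
    · simp [hi, hy.1 i hi]
  · intro T hT
    simp only [coe_filter, Set.mem_setOf_eq, mem_powerset] at hT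
    exact h_restrict T hT.1

lemma prod_mixture_eq_sum {n : ℕ} (q : ℝ≥0∞) (x y : Fin n → Bool) :
    ∏ i, (q * 2⁻¹ + (1 - q) * if y i = x i then 1 else 0)
      = ∑ H, q ^ #H * (1 - q) ^ (n - #H) * 2⁻¹ ^ #H * if ∀ i ∉ H, y i = x i then 1 else 0 := by
  rw [prod_add, powerset_univ]
  refine sum_congr rfl fun H _ => ?_
  rw [← compl_eq_univ_sdiff, prod_const, prod_mul_distrib, prod_const, prod_boole, card_compl,
    Fintype.card_fin, mul_pow]
  simp only [mem_compl]
  ring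

lemma indep_map_count_apply_of_mixture {n : ℕ} (q : ℝ≥0∞) (x : Fin n → Bool)
    (f : Fin n → PMF Bool) (hf : ∀ i b, f i b = q * 2⁻¹ + (1 - q) * if b = x i then 1 else 0)
    (r : ℕ) :
    (indep n f).map (List.count true) r = ∑ H, q ^ #H * (1 - q) ^ (n - #H) * CH n H x r := by
  calc (indep n f).map (List.count true) r
      = ∑ y : Fin n → Bool, ∑ H, q ^ #H * (1 - q) ^ (n - #H) * 2⁻¹ ^ #H *
          if (∀ i ∉ H, y i = x i) ∧ (List.ofFn y).count true = r then 1 else 0 := by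
        rw [indep_map_apply]
        refine sum_congr rfl fun y _ => ?_
        by_cases hr : (List.ofFn y).count true = r
        · simp only [hr, if_true, and_true, hf, prod_mixture_eq_sum]
        · simp [hr, Ne.symm hr]
    _ = ∑ H, q ^ #H * (1 - q) ^ (n - #H) * CH n H x r := by
        rw [sum_comm]
        refine sum_congr rfl fun H _ => ?_
        rw [← mul_sum, sum_boole, card_eqOn_compl_count_eq, CH_apply]
        ring

lemma rr_apply (n : ℕ) (lam : ℝ) (x y : Bool) :
    rr n lam x y = min (ENNReal.ofReal (lam / n)) 1 * 2⁻¹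
      + (1 - min (ENNReal.ofReal (lam / n)) 1) * if y = x then 1 else 0 := by
  have hq_top : min (ENNReal.ofReal (lam / n)) 1 ≠ ⊤ :=
    ne_top_of_le_ne_top ENNReal.one_ne_top (min_le_right _ _)
  have h_half : (((ENNReal.toNNReal 2)⁻¹ : NNReal) : ℝ≥0∞) = 2⁻¹ := by
    rw [← ENNReal.toNNReal_inv, ENNReal.coe_toNNReal (by simp)]
  rw [rr, PMF.bind_apply, tsum_bool]
  cases y <;> cases x <;>
    simp [PMF.bernoulli_apply, ENNReal.one_sub_inv_two, add_comm, ENNReal.coe_toNNReal hq_top,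
      h_half]

theorem stmt0_general (n : ℕ) (lam : ℝ) (x : Fin n → Bool) (r : ℕ) :
    Cmech n lam x r =
      ((indep n fun i => rr n lam (x i)).map fun l => l.count true) r := by
  rw [Cmech, binom_bind_Cs_apply]
  exact (indep_map_count_apply_of_mixture _ x _ (fun i b => rr_apply n lam (x i) b) r).symm

/-- for every `n`, `λ ∈ (0,n)`, `x ∈ {0,1}^n` and `r ∈ {0,…,n}`,
`Pr[C_λ(x) = r] = Pr[∑ y_i = r]` where `y_i ~ R_{n,λ}(x_i)` independently. -/
theorem stmt0 (n : ℕ) (lam : ℝ) (hlam0 : 0 < lam) (hlamn : lam < n)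
    (x : Fin n → Bool) (r : ℕ) (hr : r ≤ n) :
    Cmech n lam x r =
      ((indep n fun i => rr n lam (x i)).map fun l => l.count true) r :=
  stmt0_general n lam x r

end ShuffledDP
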